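/- Let A be the SARX companion matrix with h^n ≠ 0. Then the minimal polynomial of A equals its characteristic polynomial, and both equal z^{n_u} (z^{n_y} - Σ_{i=1}^{n_y} h^i z^{n_y - i}). -/

import Mathlib

/-- The companion-like matrix of a SISO (S)ARX system of type `(ny, nu)` with coefficient
row `h` (0-based indexing: `h i` corresponds to `h^{i+1}` in the paper):
`A e_j = h^j e_1 + e_{j+1}` for `j ∈ {1,...,n-1} \ {n_y}`, `A e_{n_y} = h^{n_y} e_1`,
`A e_n = h^n e_1`, where `n = n_y + n_u`. -/
def sarxCompanion (ny nu : ℕ) (h : Fin (ny + nu) → ℝ) :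
    Matrix (Fin (ny + nu)) (Fin (ny + nu)) ℝ :=
  Matrix.of fun i k =>
    (if (i : ℕ) = 0 then h k else 0) +
    (if (i : ℕ) = (k : ℕ) + 1 ∧ (k : ℕ) + 1 ≠ ny then 1 else 0)

/-- The subspace `X1 = span{e_1, ..., e_{n_y}}`. -/
def sarxX1 (ny nu : ℕ) : Submodule ℝ (Fin (ny + nu) → ℝ) :=
  Submodule.span ℝ {v : Fin (ny + nu) → ℝ | ∃ i : Fin (ny + nu), (i : ℕ) < ny ∧ v = Pi.single i 1}

/-!
Let `F` be the action `x ↦ x A` on row vectors. In 0-based indices `F` sends `e₀ ↦ h`,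
`e_j ↦ e_{j-1}` for `j ≠ 0, ny`, and `e_ny ↦ 0`. The orbit of `e_{ny-1}` runs through
`e_{ny-2}, …, e₀` and then reaches `h`; further powers shift the tail of `h` down towards `e_ny`,
where it dies after `nu` steps. Since `h_{n-1} ≠ 0`, these shifted copies of `h` recover
`e_ny, …, e_{n-1}` one at a time, so `e_{ny-1}` is a cyclic vector and the minimal polynomial has
degree `n`. The same computation shows that `X^nu (X^ny - ∑ h_i X^{ny-1-i})` kills `e_{ny-1}`, hence
kills `F`; being monic of degree `n`, it is the minimal and so also the characteristic polynomial.
-/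

open Polynomial Module Matrix

section Cyclic

variable {K V : Type*} [Field K] [AddCommGroup V] [Module K V]

def cyclicSubmodule (f : Module.End K V) (v : V) : Submodule K V :=
  Submodule.span K (Set.range fun k : ℕ => (f ^ k) v)

def IsCyclicVector (f : Module.End K V) (v : V) : Prop :=
  cyclicSubmodule f v = ⊤

theorem pow_apply_mem_cyclicSubmodule (f : Module.End K V) (v : V) (k : ℕ) :
    (f ^ k) v ∈ cyclicSubmodule f v :=
  Submodule.subset_span ⟨k, rfl⟩

variable {f : Module.End K V} {v : V}

theorem IsCyclicVector.aeval_eq_zero (hv : IsCyclicVector f v) {p : K[X]}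
    (hp : aeval f p v = 0) : aeval f p = 0 :=
  LinearMap.ext_on_range hv fun k => by
    have hcomm : aeval f p * f ^ k = f ^ k * aeval f p := by
      simpa using ((Commute.all p (X ^ k)).map (aeval f)).eq
    rw [LinearMap.zero_apply, ← Module.End.mul_apply, hcomm, Module.End.mul_apply, hp, map_zero]

theorem IsCyclicVector.finrank_le_natDegree (hv : IsCyclicVector f v) {p : K[X]} (hp : p.Monic)
    (hfp : aeval f p = 0) : finrank K V ≤ p.natDegree := by
  set S := Set.range fun i : Fin p.natDegree => (f ^ (i : ℕ)) v
  -- `f ^ k = r(f)` for the remainder `r` of `X ^ k` modulo `p`, which has degree `< deg p`.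
  have hpow (k : ℕ) : (f ^ k) v ∈ Submodule.span K S := by
    rw [← aeval_X_pow (R := K), ← aeval_modByMonic_eq_self_of_root hfp]
    set r := X ^ k %ₘ p
    by_cases hr : r = 0
    · simp [hr]
    rw [aeval_eq_sum_range' (natDegree_lt_natDegree hr (degree_modByMonic_lt _ hp)),
      LinearMap.sum_apply]
    refine Submodule.sum_mem _ fun i hi => Submodule.smul_mem _ _ ?_
    exact Submodule.subset_span ⟨⟨i, Finset.mem_range.1 hi⟩, rfl⟩
  have htop : Submodule.span K S = ⊤ :=
    eq_top_iff.2 (hv ▸ Submodule.span_le.2 (Set.range_subset_iff.2 hpow))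
  calc finrank K V = S.finrank K := by rw [Set.finrank, htop, finrank_top]
    _ ≤ p.natDegree := (finrank_range_le_card _).trans_eq (Fintype.card_fin _)

theorem IsCyclicVector.minpoly_eq (hv : IsCyclicVector f v) {p : K[X]} (hp : p.Monic)
    (hdeg : p.natDegree ≤ finrank K V) (hpv : aeval f p v = 0) : minpoly K f = p := by
  have hfp := hv.aeval_eq_zero hpv
  have hint : IsIntegral K f := ⟨p, hp, hfp⟩
  refine (eq_of_monic_of_dvd_of_natDegree_le (minpoly.monic hint) hp (minpoly.dvd K f hfp) ?_).symm
  exact hdeg.trans (hv.finrank_le_natDegree (minpoly.monic hint) (minpoly.aeval K f))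

end Cyclic

theorem Matrix.aeval_transpose {R n : Type*} [CommSemiring R] [Fintype n] [DecidableEq n]
    (M : Matrix n n R) (p : R[X]) : aeval Mᵀ p = (aeval M p)ᵀ :=
  MulOpposite.op_injective <| by
    rw [← aeval_op_apply]
    exact aeval_algHom_apply (transposeAlgEquiv _ _ _ : Matrix n n R ≃ₐ[R] _) M p

theorem Matrix.minpoly_transpose {K n : Type*} [Field K] [Fintype n] [DecidableEq n]
    (M : Matrix n n K) : minpoly K Mᵀ = minpoly K M := by
  refine minpoly.unique _ _ (minpoly.monic (.of_finite K Mᵀ)) ?_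
    fun q hq h0 => minpoly.min K Mᵀ hq (by rw [aeval_transpose, h0, transpose_zero])
  rw [← transpose_transpose M, aeval_transpose, transpose_transpose, minpoly.aeval,
    transpose_zero]

theorem Matrix.minpoly_vecMulLinear {K n : Type*} [Field K] [Fintype n] [DecidableEq n]
    (M : Matrix n n K) : minpoly K M.vecMulLinear = minpoly K M := by
  rw [← mulVecLin_transpose, ← toLin'_apply', minpoly_toLin', minpoly_transpose]

theorem Polynomial.degree_sum_C_mul_X_pow_lt {R ι : Type*} [Semiring R] (s : Finset ι)
    (c : ι → R) (e : ι → ℕ) {n : ℕ} (he : ∀ i ∈ s, e i < n) :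
    degree (∑ i ∈ s, C (c i) * X ^ e i) < n :=
  (degree_sum_le _ _).trans_lt <| (Finset.sup_lt_iff (WithBot.bot_lt_coe n)).2 fun i hi =>
    (degree_C_mul_X_pow_le _ _).trans_lt (WithBot.coe_lt_coe.2 (he i hi))

section RowAction

variable {ny nu : ℕ} (h : Fin (ny + nu) → ℝ)

def sarxRowMap : Module.End ℝ (Fin (ny + nu) → ℝ) := (sarxCompanion ny nu h).vecMulLinear

theorem sarxRowMap_single_of_val_eq_zero (i : Fin (ny + nu)) (hi : (i : ℕ) = 0) :
    sarxRowMap h (Pi.single i 1) = h := by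
  ext k
  simp [sarxRowMap, sarxCompanion, hi]

theorem sarxRowMap_single_of_val_eq_succ (i j : Fin (ny + nu)) (hij : (i : ℕ) = j + 1)
    (hi : (i : ℕ) ≠ ny) : sarxRowMap h (Pi.single i 1) = Pi.single j 1 := by
  ext k
  simp only [sarxRowMap, vecMulLinear_apply, single_vecMul, one_smul, row_apply, sarxCompanion,
    of_apply]
  rcases eq_or_ne k j with rfl | hk
  · rw [Pi.single_eq_same, if_neg (by omega), if_pos ⟨hij, by omega⟩, zero_add]
  · rw [Pi.single_eq_of_ne hk, if_neg (by omega), if_neg (by omega), add_zero]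

theorem sarxRowMap_single_of_val_eq_ny (hny : 0 < ny) (i : Fin (ny + nu)) (hi : (i : ℕ) = ny) :
    sarxRowMap h (Pi.single i 1) = 0 := by
  ext k
  simp only [sarxRowMap, vecMulLinear_apply, single_vecMul, one_smul, row_apply, sarxCompanion,
    of_apply]
  rw [if_neg (by omega), if_neg (by omega), add_zero, Pi.zero_apply]

theorem sarxRowMap_pow_single (k : ℕ) (i j : Fin (ny + nu)) (hij : (i : ℕ) = j + k)
    (hblock : ny ≤ j ∨ (i : ℕ) < ny) :
    (sarxRowMap h ^ k) (Pi.single i 1) = Pi.single j 1 := by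
  induction k generalizing i with
  | zero => rw [pow_zero, Module.End.one_apply, Fin.ext (by omega : (i : ℕ) = j)]
  | succ k ih =>
    rw [pow_succ, Module.End.mul_apply,
      sarxRowMap_single_of_val_eq_succ h i ⟨i - 1, by omega⟩ (by simp; omega) (by omega)]
    exact ih _ (by simp; omega) (by simp; omega)

theorem sarxRowMap_pow_single_eq_zero (hny : 0 < ny) (k : ℕ) (i : Fin (ny + nu))
    (hi : ny ≤ i) (hik : (i : ℕ) < ny + k) : (sarxRowMap h ^ k) (Pi.single i 1) = 0 := by
  obtain ⟨m, rfl⟩ : ∃ m, k = m + 1 + (i - ny) := ⟨k - 1 - (i - ny), by omega⟩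
  rw [pow_add, Module.End.mul_apply, sarxRowMap_pow_single h _ i ⟨ny, by omega⟩ (by simp; omega)
    (.inl le_rfl), pow_succ, Module.End.mul_apply, sarxRowMap_single_of_val_eq_ny h hny _ rfl,
    map_zero]

theorem sarxRowMap_pow_ny_single (hny : 0 < ny) :
    (sarxRowMap h ^ ny) (Pi.single ⟨ny - 1, by omega⟩ 1) = h := by
  have hsplit : sarxRowMap h ^ ny = sarxRowMap h * sarxRowMap h ^ (ny - 1) := by
    rw [← pow_succ', Nat.sub_add_cancel hny]
  rw [hsplit, Module.End.mul_apply, sarxRowMap_pow_single h _ _ ⟨0, by omega⟩ (by simp)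
    (.inr (by simp; omega)), sarxRowMap_single_of_val_eq_zero h _ rfl]

theorem sarxRowMap_pow_single_mem_cyclicSubmodule (hny : 0 < ny) (k : ℕ) (i : Fin (ny + nu))
    (hi : (i : ℕ) < ny) :
    (sarxRowMap h ^ k) (Pi.single i 1) ∈
      cyclicSubmodule (sarxRowMap h) (Pi.single ⟨ny - 1, by omega⟩ 1) := by
  rw [← sarxRowMap_pow_single h (ny - 1 - i) ⟨ny - 1, by omega⟩ i (by simp; omega)
    (.inr (by simp; omega)), ← Module.End.mul_apply, ← pow_add]
  exact pow_apply_mem_cyclicSubmodule _ _ _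

theorem single_mem_cyclicSubmodule_sarxRowMap (hny : 0 < ny) (hz : h ⟨ny + nu - 1, by omega⟩ ≠ 0)
    (j : Fin (ny + nu)) (hj : ny ≤ j)
    (ih : ∀ i < j, Pi.single i 1 ∈
      cyclicSubmodule (sarxRowMap h) (Pi.single ⟨ny - 1, by omega⟩ 1)) :
    Pi.single j 1 ∈ cyclicSubmodule (sarxRowMap h) (Pi.single ⟨ny - 1, by omega⟩ 1) := by
  set F := sarxRowMap h
  set W := cyclicSubmodule F (Pi.single ⟨ny - 1, by omega⟩ 1)
  set m := ny + nu - 1 - j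
  set last : Fin (ny + nu) := ⟨ny + nu - 1, by omega⟩
  -- `F ^ m` moves `e_last` to `e_j` and every other `e_i` to `0` or to some `e_{i'}` with `i' < j`.
  have hrest : ∑ i ∈ Finset.univ.erase last, h i • (F ^ m) (Pi.single i 1) ∈ W := by
    refine Submodule.sum_mem _ fun i hi => W.smul_mem _ ?_
    have hi' : (i : ℕ) ≠ ny + nu - 1 := fun hil => Finset.ne_of_mem_erase hi (Fin.ext hil)
    rcases lt_or_ge (i : ℕ) ny with hin | hin
    · exact sarxRowMap_pow_single_mem_cyclicSubmodule h hny m i hin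
    rcases lt_or_ge (i : ℕ) (ny + m) with him | him
    · rw [sarxRowMap_pow_single_eq_zero h hny m i hin him]
      exact W.zero_mem
    · rw [sarxRowMap_pow_single h m i ⟨i - m, by omega⟩ (by simp; omega) (.inl (by simp; omega))]
      exact ih _ (by rw [Fin.lt_def]; simp; omega)
  have hexpand : (F ^ m) h = h last • Pi.single j 1 +
      ∑ i ∈ Finset.univ.erase last, h i • (F ^ m) (Pi.single i 1) := by
    conv_lhs => rw [pi_eq_sum_univ' h]
    rw [map_sum, ← Finset.add_sum_erase _ _ (Finset.mem_univ last), map_smul,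
      sarxRowMap_pow_single h m last j (by simp only [last, m]; omega) (.inl hj)]
    simp only [map_smul]
  have hh : (F ^ m) h ∈ W := by
    rw [← sarxRowMap_pow_ny_single h hny, ← Module.End.mul_apply, ← pow_add]
    exact pow_apply_mem_cyclicSubmodule _ _ _
  rw [hexpand] at hh
  exact (W.smul_mem_iff hz).1 ((W.add_mem_iff_left hrest).1 hh)

-- `Pi.single ⟨ny - 1, _⟩ 1` is the paper's generator `e_{n_y}ᵀ` (indices here are 0-based).
theorem isCyclicVector_sarxRowMap (hny : 0 < ny) (hz : h ⟨ny + nu - 1, by omega⟩ ≠ 0) :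
    IsCyclicVector (sarxRowMap h) (Pi.single ⟨ny - 1, by omega⟩ 1) := by
  rw [IsCyclicVector, eq_top_iff, ← (Pi.basisFun ℝ _).span_eq, Submodule.span_le]
  rintro _ ⟨j, rfl⟩
  rw [Pi.basisFun_apply]
  induction j using WellFoundedLT.induction with
  | ind j ih =>
    rcases lt_or_ge (j : ℕ) ny with hj | hj
    · simpa using sarxRowMap_pow_single_mem_cyclicSubmodule h hny 0 j hj
    · exact single_mem_cyclicSubmodule_sarxRowMap h hny hz j hj ih

end RowAction

noncomputable def sarxCharpoly (ny nu : ℕ) (h : Fin (ny + nu) → ℝ) : ℝ[X] :=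
  X ^ nu * (X ^ ny - ∑ i : Fin ny, C (h (Fin.castAdd nu i)) * X ^ (ny - 1 - (i : ℕ)))

section Charpoly

variable {ny nu : ℕ} (h : Fin (ny + nu) → ℝ)

theorem sarxCharpoly_monic : (sarxCharpoly ny nu h).Monic :=
  (monic_X_pow nu).mul <| monic_X_pow_sub <|
    degree_sum_C_mul_X_pow_lt _ _ _ fun i _ => by omega

theorem natDegree_sarxCharpoly : (sarxCharpoly ny nu h).natDegree = ny + nu := by
  have hS := degree_sum_C_mul_X_pow_lt Finset.univ (fun i : Fin ny => h (Fin.castAdd nu i))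
    (n := ny) (fun i => ny - 1 - i) fun i _ => by omega
  rw [sarxCharpoly, (monic_X_pow nu).natDegree_mul (monic_X_pow_sub hS), natDegree_X_pow,
    natDegree_eq_of_degree_eq_some
      ((degree_sub_eq_left_of_degree_lt (by rwa [degree_X_pow])).trans (degree_X_pow ny)),
    add_comm]

theorem aeval_sarxCharpoly_single (hny : 0 < ny) :
    aeval (sarxRowMap h) (sarxCharpoly ny nu h) (Pi.single ⟨ny - 1, by omega⟩ 1) = 0 := by
  have hpow (i : Fin ny) : (sarxRowMap h ^ (ny - 1 - i)) (Pi.single ⟨ny - 1, by omega⟩ 1) =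
      Pi.single (Fin.castAdd nu i) 1 :=
    sarxRowMap_pow_single h _ _ _ (by simp; omega) (.inr (by simp; omega))
  have htail : aeval (sarxRowMap h)
      (X ^ ny - ∑ i : Fin ny, C (h (Fin.castAdd nu i)) * X ^ (ny - 1 - (i : ℕ)))
      (Pi.single ⟨ny - 1, by omega⟩ 1) =
        ∑ i : Fin nu, h (Fin.natAdd ny i) • Pi.single (Fin.natAdd ny i) 1 := by
    simp only [map_sub, map_sum, C_mul', map_smul, aeval_X_pow, LinearMap.sub_apply,
      LinearMap.sum_apply, LinearMap.smul_apply, hpow, sarxRowMap_pow_ny_single h hny]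
    rw [sub_eq_iff_eq_add', ← Fin.sum_univ_add (f := fun j => h j • Pi.single j (1 : ℝ))]
    exact pi_eq_sum_univ' h
  rw [sarxCharpoly, map_mul, aeval_X_pow, Module.End.mul_apply, htail, map_sum]
  refine Finset.sum_eq_zero fun i _ => ?_
  rw [map_smul, sarxRowMap_pow_single_eq_zero h hny nu _ (by simp) (by simp), smul_zero]

end Charpoly

/-- If `h^n ≠ 0`, the minimal polynomial of the SARX companion matrix equals its
characteristic polynomial, and both equal `z^{n_u} (z^{n_y} - Σ_{i=1}^{n_y} h^i z^{n_y-i})`. -/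
theorem stmt9 (ny nu : ℕ) (hny : 1 ≤ ny) (h : Fin (ny + nu) → ℝ)
    (hz : h ⟨ny + nu - 1, by omega⟩ ≠ 0) :
    minpoly ℝ (sarxCompanion ny nu h) =
      Polynomial.X ^ nu *
        (Polynomial.X ^ ny -
          ∑ i : Fin ny, Polynomial.C (h (Fin.castAdd nu i)) * Polynomial.X ^ (ny - 1 - (i : ℕ))) ∧
    (sarxCompanion ny nu h).charpoly =
      Polynomial.X ^ nu *
        (Polynomial.X ^ ny -
          ∑ i : Fin ny, Polynomial.C (h (Fin.castAdd nu i)) * Polynomial.X ^ (ny - 1 - (i : ℕ))) := by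
  have hmin : minpoly ℝ (sarxCompanion ny nu h) = sarxCharpoly ny nu h := by
    rw [← minpoly_vecMulLinear]
    exact (isCyclicVector_sarxRowMap h hny hz).minpoly_eq (sarxCharpoly_monic h)
      (by rw [natDegree_sarxCharpoly, finrank_fin_fun]) (aeval_sarxCharpoly_single h hny)
  have hdvd := (sarxCompanion ny nu h).minpoly_dvd_charpoly
  rw [hmin] at hdvd
  exact ⟨hmin, eq_of_monic_of_dvd_of_natDegree_le (sarxCharpoly_monic h) (charpoly_monic _) hdvd
    (by rw [charpoly_natDegree_eq_dim, Fintype.card_fin]; exact (natDegree_sarxCharpoly h).ge)⟩
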